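/- arXiv:0711.3878 — 5 statements merged into one kernel-verified Lean document; each statement's English description precedes it below -/
import Mathlib

section
/- Let p be a prime, k a finite field of characteristic p, and f ∈ k[T] a separable polynomial of degree n which factors into ν irreducible factors over k. If p is odd, then the discriminant of f is a square in k^× if and only if n - ν is even. -/
/-!
The Frobenius `x ↦ x ^ q` of `k = 𝔽_q` permutes the roots `r i` of `f` by some `σ`. Since the
conjugates of an algebraic element over a finite field are exactly its Frobenius iterates, the
cycles of `σ` are the sets of roots sharing a minimal polynomial, i.e. one cycle per irreducible
factor; hence `sign σ = (-1) ^ (n - ν)`. The square root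
`δ = lc(f) ^ (n - 1) * ∏_{i<j} (r j - r i)` of `d` is a Vandermonde determinant, so
`δ ^ q = sign σ * δ`. Finally `d` is a square in `k` iff `δ ∈ k` iff `δ` is fixed by Frobenius,
and as `-1 ≠ 1` in odd characteristic this happens iff `n - ν` is even.
-/

open Polynomial Finset Function

namespace Finset

variable {α β γ : Type*} [DecidableEq β] [DecidableEq γ] {s : Finset α} {c : α → β}
  {e : α → γ}

lemma card_image_eq_card_image_pair (h : ∀ i ∈ s, ∀ j ∈ s, c i = c j → e i = e j) :
    #(s.image c) = #(s.image fun i => (c i, e i)) := by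
  rw [← card_image_of_injOn (f := Prod.fst), image_image]
  · rfl
  rintro _ hx _ hy hxy
  obtain ⟨i, hi, rfl⟩ := mem_image.mp hx
  obtain ⟨j, hj, rfl⟩ := mem_image.mp hy
  exact Prod.ext hxy (h i hi j hj hxy)

lemma card_image_eq_card_image_of_eq_iff (h : ∀ i ∈ s, ∀ j ∈ s, c i = c j ↔ e i = e j) :
    #(s.image c) = #(s.image e) := by
  rw [card_image_eq_card_image_pair fun i hi j hj => (h i hi j hj).1,
    card_image_eq_card_image_pair fun i hi j hj => (h i hi j hj).2,
    ← card_image_of_injective _ Prod.swap_injective, image_image]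
  rfl

end Finset

namespace Equiv.Perm

variable {α : Type*} [Fintype α] [DecidableEq α]

lemma image_cycleOf_support (σ : Perm α) :
    σ.support.image σ.cycleOf = σ.cycleFactorsFinset := by
  ext τ
  simp only [mem_image]
  constructor
  · rintro ⟨x, hx, rfl⟩
    exact cycleOf_mem_cycleFactorsFinset_iff.mpr hx
  · intro hτ
    obtain ⟨x, hx⟩ := (mem_cycleFactorsFinset_iff.mp hτ).1.nonempty_support
    exact ⟨x, mem_cycleFactorsFinset_support_le hτ hx, (cycle_is_cycleOf hx hτ).symm⟩

lemma card_image_eq_card_cycleFactorsFinset_add {β : Type*} [DecidableEq β] (σ : Perm α)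
    {c : α → β} (hc : ∀ i j, c i = c j ↔ σ.SameCycle i j) :
    #(univ.image c) = #σ.cycleFactorsFinset + #σ.supportᶜ := by
  have hdisj : _root_.Disjoint (σ.support.image c) (σ.supportᶜ.image c) := by
    refine disjoint_left.mpr fun b hb hb' => ?_
    obtain ⟨i, hi, rfl⟩ := mem_image.mp hb
    obtain ⟨j, hj, hji⟩ := mem_image.mp hb'
    exact mem_compl.mp hj (((hc j i).mp hji).mem_support_iff.mpr hi)
  rw [← union_compl σ.support, image_union, card_union_of_disjoint hdisj,
    card_image_of_injOn (s := σ.supportᶜ), ← image_cycleOf_support,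
    card_image_eq_card_image_of_eq_iff (e := σ.cycleOf)]
  · intro i hi j hj
    rw [hc, sameCycle_iff_cycleOf_eq_of_mem_support hi hj]
  · intro i hi j _ hij
    exact ((hc i j).mp hij).eq_of_left (notMem_support.mp (mem_compl.mp hi))

theorem sign_eq_neg_one_pow_card_sub_card_image {β : Type*} [DecidableEq β] (σ : Perm α)
    {c : α → β} (hc : ∀ i j, c i = c j ↔ σ.SameCycle i j) :
    sign σ = (-1) ^ (Fintype.card α - #(univ.image c)) := by
  have hcard : Multiset.card σ.cycleType = #σ.cycleFactorsFinset := by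
    rw [cycleType_def, Multiset.card_map]; rfl
  set m := Multiset.card σ.cycleType
  have hle : m * 2 ≤ #σ.support := by
    rw [← sum_cycleType]
    simpa using Multiset.card_nsmul_le_sum fun _ h => two_le_of_mem_cycleType (σ := σ) h
  have hsupp : #σ.support ≤ Fintype.card α := card_le_univ _
  rw [sign_of_cycleType, card_image_eq_card_cycleFactorsFinset_add σ hc, card_compl,
    sum_cycleType, ← hcard]
  have hexp :
      #σ.support + m = Fintype.card α - (m + (Fintype.card α - #σ.support)) + 2 * m := by
    omega
  rw [hexp, pow_add, pow_mul, neg_one_sq, one_pow, mul_one]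

theorem exists_apply_eq_of_injective {ι β : Type*} [Finite ι] {r : ι → β}
    (hr : Injective r) {φ : β → β} (hφ : Injective φ) (h : ∀ i, φ (r i) ∈ Set.range r) :
    ∃ σ : Perm ι, ∀ i, r (σ i) = φ (r i) := by
  choose s hs using h
  have hs_inj : Injective s := fun i j hij => hr (hφ (by rw [← hs, ← hs, hij]))
  exact ⟨Equiv.ofBijective s (Finite.injective_iff_bijective.mp hs_inj), hs⟩

end Equiv.Perm

theorem isSquare_iff_mem_range_of_algebraMap_eq_sq {k L : Type*} [Field k] [Field L]
    [Algebra k L] {a : k} {δ : L} (h : algebraMap k L a = δ ^ 2) :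
    IsSquare a ↔ δ ∈ (algebraMap k L).range := by
  constructor
  · rintro ⟨e, rfl⟩
    rw [map_mul, ← sq, sq_eq_sq_iff_eq_or_eq_neg] at h
    rcases h with h | h
    · exact ⟨e, h⟩
    · exact ⟨-e, by rw [map_neg, h, neg_neg]⟩
  · rintro ⟨e, rfl⟩
    exact ⟨e, (algebraMap k L).injective (by rw [h, map_mul, sq])⟩

namespace Matrix

variable {R : Type*} [CommRing R] {n : ℕ}

theorem det_vandermonde_sq (v : Fin n → R) :
    (vandermonde v).det ^ 2 = ∏ i, ∏ j ∈ univ.filter (i < ·), (v i - v j) ^ 2 := by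
  rw [det_vandermonde, ← prod_pow]
  refine prod_congr rfl fun i _ => ?_
  rw [← prod_pow, filter_lt_eq_Ioi]
  exact prod_congr rfl fun j _ => sub_sq_comm _ _

theorem map_det_vandermonde_of_apply_eq (φ : R →+* R) {v : Fin n → R} {σ : Equiv.Perm (Fin n)}
    (h : ∀ i, φ (v i) = v (σ i)) :
    φ (vandermonde v).det = Equiv.Perm.sign σ * (vandermonde v).det := by
  rw [RingHom.map_det, ← det_permute]
  congr 1
  ext i j
  simp [h]

end Matrix

theorem UniqueFactorizationMonoid.card_toFinset_factors_of_squarefree {α : Type*}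
    [CommMonoidWithZero α] [Nontrivial α] [NormalizationMonoid α] [UniqueFactorizationMonoid α]
    [DecidableEq α] {x : α} (hx : Squarefree x) :
    #(factors x).toFinset = #(normalizedFactors x).toFinset := by
  have hnodup := (squarefree_iff_nodup_normalizedFactors hx.ne_zero).mp hx
  rw [Multiset.toFinset_card_of_nodup hnodup, Multiset.toFinset_card_of_nodup (hnodup.of_map _),
    normalizedFactors, Multiset.card_map]

theorem neg_one_ne_one_of_odd_of_charP {R : Type*} [Ring R] [Nontrivial R] {p : ℕ} [CharP R p]
    (hp : Odd p) : (-1 : R) ≠ 1 := by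
  refine Ring.neg_one_ne_one_of_char_ne_two ?_
  rw [ringChar.eq R p]
  rintro rfl
  exact Nat.not_even_iff_odd.mpr hp even_two

namespace FiniteField

variable {k L : Type*} [Field k] [Fintype k] [Field L] [Algebra k L]

theorem pow_card_pow_eq_self_iff {x : L} (hx : IsIntegral k x) (e : ℕ) :
    x ^ Fintype.card k ^ e = x ↔ (minpoly k x).natDegree ∣ e := by
  rw [(minpoly.irreducible hx).natDegree_dvd_iff_dvd_X_pow_card_pow_sub_X, minpoly.dvd_iff,
    Nat.card_eq_fintype_card, map_sub, map_pow, aeval_X, sub_eq_zero]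

theorem pow_card_eq_self_iff_mem_range {x : L} (hx : IsIntegral k x) :
    x ^ Fintype.card k = x ↔ x ∈ (algebraMap k L).range := by
  simpa [Nat.dvd_one, minpoly.natDegree_eq_one_iff] using pow_card_pow_eq_self_iff hx 1

theorem minimalPeriod_pow_card {x : L} (hx : IsIntegral k x) :
    minimalPeriod (· ^ Fintype.card k) x = (minpoly k x).natDegree := by
  have hper : ∀ e, IsPeriodicPt (· ^ Fintype.card k) e x ↔ (minpoly k x).natDegree ∣ e := by
    intro e
    rw [IsPeriodicPt, IsFixedPt, pow_iterate, pow_card_pow_eq_self_iff hx]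
  exact Nat.dvd_antisymm ((hper _).mpr dvd_rfl).minimalPeriod_dvd
    ((hper _).mp (isPeriodicPt_minimalPeriod _ x))

theorem minpoly_pow_card_pow (x : L) (t : ℕ) :
    minpoly k (x ^ Fintype.card k ^ t) = minpoly k x := by
  have h := minpoly.algHom_eq (frobeniusAlgHom k L ^ t) (RingHom.injective _) x
  rwa [AlgHom.coe_pow, coe_frobeniusAlgHom, pow_iterate] at h

theorem minpoly_eq_minpoly_iff {x y : L} (hx : IsIntegral k x) :
    minpoly k x = minpoly k y ↔ ∃ t, x ^ Fintype.card k ^ t = y := by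
  refine ⟨fun h => ?_, fun ⟨t, ht⟩ => ht ▸ (minpoly_pow_card_pow x t).symm⟩
  classical
  set m := (minpoly k x).natDegree
  set orbit := (range m).image fun t => x ^ Fintype.card k ^ t
  have horbit_card : #orbit = m := by
    rw [card_image_of_injOn, card_range]
    intro s hs t ht hst
    have := iterate_injOn_Iio_minimalPeriod (f := (· ^ Fintype.card k)) (x := x)
    simp only [pow_iterate, minimalPeriod_pow_card hx] at this
    exact this (by simpa using hs) (by simpa using ht) hst
  have horbit_sub : orbit ⊆ ((minpoly k x).aroots L).toFinset := by
    intro z hz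
    obtain ⟨t, -, rfl⟩ := mem_image.mp hz
    rw [Multiset.mem_toFinset, mem_aroots]
    exact ⟨minpoly.ne_zero hx, minpoly_pow_card_pow (k := k) x t ▸ minpoly.aeval k _⟩
  have horbit : orbit = ((minpoly k x).aroots L).toFinset := by
    refine eq_of_subset_of_card_le horbit_sub ?_
    rw [horbit_card]
    exact (Multiset.toFinset_card_le _).trans ((card_roots' _).trans natDegree_map_le)
  have hy : y ∈ orbit := by
    rw [horbit, Multiset.mem_toFinset, mem_aroots]
    exact ⟨minpoly.ne_zero hx, h ▸ minpoly.aeval k y⟩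
  obtain ⟨t, -, ht⟩ := mem_image.mp hy
  exact ⟨t, ht⟩

end FiniteField

section Roots

variable {k K : Type*} [Field k] [Field K] [Algebra k K] {f : k[X]} {n : ℕ} {r : Fin n → K}

theorem aeval_eq_zero_iff_mem_range_of_map_eq (hf0 : f ≠ 0)
    (hr : f.map (algebraMap k K) = C (algebraMap k K f.leadingCoeff) * ∏ i, (X - C (r i)))
    (x : K) : aeval x f = 0 ↔ x ∈ Set.range r := by
  have hlc : algebraMap k K f.leadingCoeff ≠ 0 := by simpa using hf0
  rw [← eval_map_algebraMap, hr, eval_mul, eval_C, eval_prod, mul_eq_zero, or_iff_right hlc,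
    prod_eq_zero_iff]
  simp [sub_eq_zero, eq_comm]

theorem injective_of_separable_of_map_eq (hf : f.Separable)
    (hr : f.map (algebraMap k K) = C (algebraMap k K f.leadingCoeff) * ∏ i, (X - C (r i))) :
    Injective r := by
  have h := hf.map (f := algebraMap k K)
  rw [hr] at h
  exact separable_prod_X_sub_C_iff.mp h.of_mul_right

theorem image_minpoly_eq_toFinset_normalizedFactors [DecidableEq k] [IsAlgClosed K] (hf0 : f ≠ 0)
    (hroot : ∀ x : K, aeval x f = 0 ↔ x ∈ Set.range r) :
    univ.image (fun i => minpoly k (r i)) =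
      (UniqueFactorizationMonoid.normalizedFactors f).toFinset := by
  ext g
  simp only [mem_image, mem_univ, true_and, Multiset.mem_toFinset,
    Polynomial.mem_normalizedFactors_iff hf0]
  constructor
  · rintro ⟨i, rfl⟩
    have hfi : aeval (r i) f = 0 := (hroot _).mpr ⟨i, rfl⟩
    have hi : IsIntegral k (r i) := IsAlgebraic.isIntegral ⟨f, hf0, hfi⟩
    exact ⟨minpoly.irreducible hi, minpoly.monic hi, minpoly.dvd k _ hfi⟩
  · rintro ⟨hirr, hmonic, hdvd⟩
    obtain ⟨y, hy⟩ := IsAlgClosed.exists_aeval_eq_zero K g (degree_pos_of_irreducible hirr).ne'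
    obtain ⟨i, rfl⟩ := (hroot y).mp (aeval_eq_zero_of_dvd_aeval_eq_zero hdvd hy)
    exact ⟨i, (minpoly.eq_of_irreducible_of_monic hirr hy hmonic).symm⟩

end Roots

section Frobenius

variable {k K : Type*} [Field k] [Fintype k] [Field K] [Algebra k K] {n : ℕ} {r : Fin n → K}
  {σ : Equiv.Perm (Fin n)}

theorem minpoly_eq_minpoly_iff_sameCycle (hr : Injective r)
    (hσ : ∀ i, r (σ i) = r i ^ Fintype.card k) {i j : Fin n} (hi : IsIntegral k (r i)) :
    minpoly k (r i) = minpoly k (r j) ↔ σ.SameCycle i j := by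
  have hpow : ∀ t i, r ((σ ^ t) i) = r i ^ Fintype.card k ^ t := by
    intro t
    induction t with
    | zero => simp
    | succ t ih => intro i; rw [pow_succ', Equiv.Perm.mul_apply, hσ, ih, ← pow_mul, pow_succ]
  rw [FiniteField.minpoly_eq_minpoly_iff hi]
  constructor
  · rintro ⟨t, ht⟩
    exact ⟨t, hr (by rw [zpow_natCast, hpow, ht])⟩
  · intro h
    obtain ⟨t, -, rfl⟩ := h.exists_pow_eq'
    exact ⟨t, (hpow t i).symm⟩

theorem exists_perm_apply_eq_pow_card {f : k[X]}
    (hroot : ∀ x : K, aeval x f = 0 ↔ x ∈ Set.range r) (hrinj : Injective r) :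
    ∃ σ : Equiv.Perm (Fin n), ∀ i, r (σ i) = r i ^ Fintype.card k := by
  let frob := FiniteField.frobeniusAlgHom k K
  obtain ⟨σ, hσ⟩ := Equiv.Perm.exists_apply_eq_of_injective hrinj (frob : K →+* K).injective
    fun i => (hroot (frob (r i))).mp <| by
      rw [aeval_algHom_apply, (hroot _).mpr ⟨i, rfl⟩, map_zero]
  exact ⟨σ, hσ⟩

theorem det_vandermonde_pow_card (hσ : ∀ i, r (σ i) = r i ^ Fintype.card k) :
    (Matrix.vandermonde r).det ^ Fintype.card k =
      Equiv.Perm.sign σ * (Matrix.vandermonde r).det :=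
  Matrix.map_det_vandermonde_of_apply_eq (FiniteField.frobeniusAlgHom k K : K →+* K)
    fun i => (hσ i).symm

theorem sign_eq_neg_one_pow_card_sub_card_factors [DecidableEq k] [IsAlgClosed K] {f : k[X]}
    (hf : f.Separable) (hroot : ∀ x : K, aeval x f = 0 ↔ x ∈ Set.range r)
    (hrinj : Injective r) (hσ : ∀ i, r (σ i) = r i ^ Fintype.card k) :
    Equiv.Perm.sign σ = (-1) ^ (n - #(UniqueFactorizationMonoid.factors f).toFinset) := by
  have hint (i : Fin n) : IsIntegral k (r i) :=
    IsAlgebraic.isIntegral ⟨f, hf.ne_zero, (hroot _).mpr ⟨i, rfl⟩⟩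
  rw [UniqueFactorizationMonoid.card_toFinset_factors_of_squarefree hf.squarefree,
    ← image_minpoly_eq_toFinset_normalizedFactors hf.ne_zero hroot]
  simpa using Equiv.Perm.sign_eq_neg_one_pow_card_sub_card_image σ fun i j =>
    minpoly_eq_minpoly_iff_sameCycle hrinj hσ (hint i)

end Frobenius

open Polynomial in
theorem stmt0_general (p : ℕ) (hp : Odd p)
    (k : Type) [Field k] [Fintype k] [DecidableEq k] [CharP k p]
    (f : Polynomial k) (hf : f.Separable)
    (n : ℕ)
    (ν : ℕ) (hν : ν = (UniqueFactorizationMonoid.factors f).toFinset.card)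
    (r : Fin n → AlgebraicClosure k)
    (hr : f.map (algebraMap k (AlgebraicClosure k)) =
      C (algebraMap k (AlgebraicClosure k) f.leadingCoeff) * ∏ i, (X - C (r i)))
    (d : k)
    (hd : algebraMap k (AlgebraicClosure k) d =
      algebraMap k (AlgebraicClosure k) f.leadingCoeff ^ (2 * n - 2) *
        ∏ i : Fin n, ∏ j ∈ Finset.univ.filter (fun j => i < j), (r i - r j) ^ 2) :
    IsSquare d ↔ Even (n - ν) := by
  have hroot := aeval_eq_zero_iff_mem_range_of_map_eq hf.ne_zero hr
  have hrinj := injective_of_separable_of_map_eq hf hr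
  obtain ⟨σ, hσ⟩ := exists_perm_apply_eq_pow_card hroot hrinj
  have hsign := sign_eq_neg_one_pow_card_sub_card_factors hf hroot hrinj hσ
  set δ : AlgebraicClosure k :=
    algebraMap k (AlgebraicClosure k) f.leadingCoeff ^ (n - 1) * (Matrix.vandermonde r).det
  have hδ_sq : algebraMap k (AlgebraicClosure k) d = δ ^ 2 := by
    rw [hd, mul_pow, ← pow_mul, Matrix.det_vandermonde_sq, Nat.sub_mul, mul_comm n]
  have hδ_ne : δ ≠ 0 := mul_ne_zero (pow_ne_zero _ (by simpa using hf.ne_zero))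
    (Matrix.det_vandermonde_ne_zero_iff.mpr hrinj)
  have hδ_frob : δ ^ Fintype.card k = (-1) ^ (n - ν) * δ := by
    rw [mul_pow, ← pow_mul, mul_comm _ (Fintype.card k), pow_mul, ← map_pow,
      FiniteField.pow_card, det_vandermonde_pow_card hσ, hsign, hν]
    push_cast
    ring
  have hneg : (-1 : AlgebraicClosure k) ≠ 1 := by
    simpa using (algebraMap k (AlgebraicClosure k)).injective.ne (neg_one_ne_one_of_odd_of_charP hp)
  rw [isSquare_iff_mem_range_of_algebraMap_eq_sq hδ_sq,
    ← FiniteField.pow_card_eq_self_iff_mem_range (Algebra.IsIntegral.isIntegral δ), hδ_frob,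
    mul_eq_right₀ hδ_ne, neg_one_pow_eq_one_iff_even hneg]

open Polynomial in
/-- Stickelberger–Pellet–Voronoï: over a finite field `k` of odd characteristic `p`, the
discriminant of a separable polynomial `f` of degree `n` with `ν` irreducible factors
(the discriminant being `lc(f)^{2n-2} ∏_{i<j} (rᵢ - rⱼ)²`, an element `d` of `k`) is a
square in `k^×` if and only if `n - ν` is even. -/
theorem stmt0 (p : ℕ) [Fact p.Prime] (hp : Odd p)
    (k : Type) [Field k] [Fintype k] [DecidableEq k] [CharP k p]
    (f : Polynomial k) (hf : f.Separable) (hf0 : f ≠ 0)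
    (n : ℕ) (hn : n = f.natDegree)
    (ν : ℕ) (hν : ν = (UniqueFactorizationMonoid.factors f).toFinset.card)
    (r : Fin n → AlgebraicClosure k)
    (hr : f.map (algebraMap k (AlgebraicClosure k)) =
      C (algebraMap k (AlgebraicClosure k) f.leadingCoeff) * ∏ i, (X - C (r i)))
    (d : k)
    (hd : algebraMap k (AlgebraicClosure k) d =
      algebraMap k (AlgebraicClosure k) f.leadingCoeff ^ (2 * n - 2) *
        ∏ i : Fin n, ∏ j ∈ Finset.univ.filter (fun j => i < j), (r i - r j) ^ 2) :
    IsSquare d ↔ Even (n - ν) :=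
  stmt0_general p hp k f hf n ν hν r hr d hd
end

section
/- Let K be a finite extension of ℚ_p with ramification index e, and suppose K^× contains an element ζ of order p^n (n ≥ 1). Then ζ ∈ U_a but ζ ∉ U_{a+1}, where a = e/(p^{n-1}(p-1)) and U_m = 1 + p_K^m. -/
/-!
Since `ζ` is a primitive `p ^ n`-th root of unity, evaluating the cyclotomic polynomial
`Φ_{p^n} = ∏ (X - μ)` (over the primitive roots `μ`) at `1` gives `p = ∏ (1 - μ)`. Every `μ - 1` is
associated to `ζ - 1`, so `p` is associated to `(ζ - 1) ^ φ(p ^ n)` and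
`e = v(p) = p ^ (n - 1) (p - 1) · v(ζ - 1)`. So `a = v(ζ - 1)`.
-/

open IsLocalRing Polynomial

theorem IsPrimitiveRoot.associated_sub_one_pow_totient {R : Type*} [CommRing R] [IsDomain R]
    {p : ℕ} [Fact p.Prime] {k : ℕ} {ζ : R} (hζ : IsPrimitiveRoot ζ (p ^ (k + 1))) :
    Associated ((ζ - 1) ^ Nat.totient (p ^ (k + 1))) (p : R) := by
  rw [← eval_one_cyclotomic_prime_pow (R := R) k, cyclotomic_eq_prod_X_sub_primitiveRoots hζ,
    eval_prod, ← hζ.card_primitiveRoots, ← Finset.prod_const]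
  refine Associated.prod _ _ _ fun μ hμ ↦ ?_
  obtain ⟨i, -, hi, rfl⟩ := hζ.isPrimitiveRoot_iff.mp (isPrimitiveRoot_of_mem_primitiveRoots hμ)
  simpa using (hζ.associated_sub_one_pow_sub_one_of_coprime hi).neg_right

namespace IsDiscreteValuationRing

variable {O : Type*} [CommRing O] [IsDomain O] [IsDiscreteValuationRing O]

theorem mem_maximalIdeal_pow_iff {x : O} {k : ℕ} :
    x ∈ IsLocalRing.maximalIdeal O ^ k ↔ (k : ℕ∞) ≤ addVal O x := by
  obtain ⟨ϖ, hϖ⟩ := exists_irreducible O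
  rw [hϖ.maximalIdeal_eq, Ideal.span_singleton_pow, Ideal.mem_span_singleton,
    ← addVal_le_iff_dvd, hϖ.addVal_pow]

theorem addVal_eq_of_maximalIdeal_pow_eq_span {x : O} {e : ℕ}
    (h : IsLocalRing.maximalIdeal O ^ e = Ideal.span {x}) : addVal O x = e := by
  obtain ⟨ϖ, hϖ⟩ := exists_irreducible O
  rw [hϖ.maximalIdeal_eq, Ideal.span_singleton_pow, Ideal.span_singleton_eq_span_singleton,
    ← addVal_eq_iff_associated, hϖ.addVal_pow] at h
  exact h.symm

end IsDiscreteValuationRing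

open IsDiscreteValuationRing (addVal addVal_pow addVal_eq_top_iff addVal_eq_iff_associated
  addVal_eq_zero_iff mem_maximalIdeal_pow_iff addVal_eq_of_maximalIdeal_pow_eq_span)

theorem stmt7_general (p : ℕ) [Fact p.Prime]
    (O : Type) [CommRing O] [IsDomain O] [IsDiscreteValuationRing O]
    [CharP (IsLocalRing.ResidueField O) p]
    (e : ℕ) (he : IsLocalRing.maximalIdeal O ^ e = Ideal.span {(p : O)})
    (n : ℕ) (hn : 0 < n) (ζ : Oˣ) (hζ : orderOf ζ = p ^ n) :
    ∃ a : ℕ, 0 < a ∧ a * (p ^ (n - 1) * (p - 1)) = e ∧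
      (ζ : O) - 1 ∈ IsLocalRing.maximalIdeal O ^ a ∧
      (ζ : O) - 1 ∉ IsLocalRing.maximalIdeal O ^ (a + 1) := by
  have hp := Fact.out (p := p.Prime)
  obtain ⟨k, rfl⟩ : ∃ k, n = k + 1 := Nat.exists_eq_add_one.mpr hn
  have hprim : IsPrimitiveRoot (ζ : O) (p ^ (k + 1)) :=
    IsPrimitiveRoot.coe_units_iff.mpr (hζ ▸ IsPrimitiveRoot.orderOf ζ)
  obtain ⟨a, ha⟩ : ∃ a : ℕ, addVal O ((ζ : O) - 1) = a := by
    refine ENat.ne_top_iff_exists.mp ?_ |>.imp fun _ ↦ Eq.symm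
    rw [Ne, addVal_eq_top_iff, sub_eq_zero]
    exact hprim.ne_one (Nat.one_lt_pow k.succ_ne_zero hp.one_lt)
  have hae : a * (p ^ k * (p - 1)) = e := by
    have := (addVal_eq_iff_associated _ _).mpr hprim.associated_sub_one_pow_totient
    rw [addVal_pow, ha, addVal_eq_of_maximalIdeal_pow_eq_span he,
      Nat.totient_prime_pow_succ hp, nsmul_eq_mul, mul_comm] at this
    exact_mod_cast this
  have hp_mem : (p : O) ∈ maximalIdeal O := by
    simpa using (residue_eq_zero_iff (p : O)).mp (CharP.cast_eq_zero _ p)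
  have he0 : e ≠ 0 := by
    rw [← Nat.cast_ne_zero (R := ℕ∞), ← addVal_eq_of_maximalIdeal_pow_eq_span he, Ne,
      addVal_eq_zero_iff, ← mem_nonunits_iff, ← IsLocalRing.mem_maximalIdeal]
    exact hp_mem
  refine ⟨a, Nat.pos_of_ne_zero fun h ↦ he0 (by rw [← hae, h, zero_mul]), hae, ?_, ?_⟩
  · rw [mem_maximalIdeal_pow_iff, ha]
  · rw [mem_maximalIdeal_pow_iff, ha, Nat.cast_le]
    omega

/-- Let `O` be the ring of integers of a finite extension of `ℚ_p` with ramification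
index `e` (`m^e = (p)`). If `ζ` is a unit of exact order `p^n` (`n ≥ 1`), then, with
`a = e / (p^{n-1}(p-1))` (necessarily a positive integer), `ζ ∈ U_a = 1 + m^a` but
`ζ ∉ U_{a+1}`. -/
theorem stmt7 (p : ℕ) [Fact p.Prime]
    (O : Type) [CommRing O] [IsDomain O] [IsDiscreteValuationRing O]
    [IsAdicComplete (IsLocalRing.maximalIdeal O) O] [CharZero O]
    [CharP (IsLocalRing.ResidueField O) p] [Finite (IsLocalRing.ResidueField O)]
    (e : ℕ) (he : IsLocalRing.maximalIdeal O ^ e = Ideal.span {(p : O)})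
    (n : ℕ) (hn : 0 < n) (ζ : Oˣ) (hζ : orderOf ζ = p ^ n) :
    ∃ a : ℕ, 0 < a ∧ a * (p ^ (n - 1) * (p - 1)) = e ∧
      (ζ : O) - 1 ∈ IsLocalRing.maximalIdeal O ^ a ∧
      (ζ : O) - 1 ∉ IsLocalRing.maximalIdeal O ^ (a + 1) :=
  stmt7_general p O e he n hn ζ hζ
end

section
/- Let K be a finite extension of ℚ_p with ramification index e and e₁ = e/(p-1). For every integer n > e₁, the p-th power map ( )^p : U_n → U_{n+e} is a bijection, where U_m = 1 + p_K^m. -/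
/-!
For `d ∈ 𝔪 ^ k` with `(p - 1) * k > e`, the binomial theorem gives
`(u + d) ^ p ≡ u ^ p + p * u ^ (p - 1) * d` modulo `𝔪 ^ (k + e + 1)`: the middle binomial
coefficients are divisible by `p`, and `d ^ p` lies in `𝔪 ^ (p * k) ⊆ 𝔪 ^ (k + e + 1)`.
Since `𝔪 ^ (k + e) = p • 𝔪 ^ k` and `p ≠ 0` in the domain, multiplication by `p` shifts
the `𝔪`-adic filtration by exactly `e`, so the linear term decides. For injectivity this
pushes `x - y` into every power of `𝔪`; for surjectivity it makes Newton's iteration for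
`x ^ p = b` gain one power of `𝔪` per step, and the iterates converge by completeness.
-/

open Finset Ideal

theorem exists_seq_of_forall_exists_succ {α : Type*} {P : ℕ → α → Prop}
    {Q : ℕ → α → α → Prop} {a₀ : α} (h₀ : P 0 a₀)
    (step : ∀ k a, P k a → ∃ b, P (k + 1) b ∧ Q k a b) :
    ∃ f : ℕ → α, ∀ k, P k (f k) ∧ Q k (f k) (f (k + 1)) := by
  have : Nonempty α := ⟨a₀⟩
  choose! g hg using step
  let f : ℕ → α := fun k => Nat.rec a₀ g k
  have hP : ∀ k, P k (f k) := fun k => by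
    induction k with
    | zero => exact h₀
    | succ k ih => exact (hg k _ ih).1
  exact ⟨f, fun k => ⟨hP k, (hg k _ (hP k)).2⟩⟩

section Adic

variable {R : Type*} [CommRing R] {I : Ideal R}

theorem IsHausdorff.eq_of_forall_sub_mem_pow [IsHausdorff I R] {x y : R}
    (h : ∀ k, x - y ∈ I ^ k) : x = y :=
  (IsHausdorff.eq_iff_smodEq (I := I)).2 fun k => by
    rw [SModEq.sub_mem, smul_eq_mul, mul_top]; exact h k

theorem IsPrecomplete.exists_sub_mem_pow [IsPrecomplete I R] {f : ℕ → R}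
    (hf : ∀ k, f (k + 1) - f k ∈ I ^ k) : ∃ L, ∀ k, f k - L ∈ I ^ k := by
  have hcauchy : ∀ {m n}, m ≤ n → f m - f n ∈ I ^ m := by
    intro m n hmn
    induction n, hmn using Nat.le_induction with
    | base => simp
    | succ n hmn ih =>
      rw [← sub_sub_sub_cancel_right (f m) (f (n + 1)) (f n)]
      exact sub_mem ih (pow_le_pow_right hmn (hf n))
  obtain ⟨L, hL⟩ := IsPrecomplete.prec ‹_› (f := f) fun hmn => by
    rw [SModEq.sub_mem, smul_eq_mul, mul_top]; exact hcauchy hmn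
  exact ⟨L, fun k => by simpa [SModEq.sub_mem, smul_eq_mul, mul_top] using hL k⟩

theorem isUnit_of_sub_one_mem_pow [IsAdicComplete I R] {n : ℕ} (hn : n ≠ 0) {x : R}
    (hx : x - 1 ∈ I ^ n) : IsUnit x :=
  isUnit_of_sub_one_mem_jacobson_bot x (IsAdicComplete.le_jacobson_bot I (pow_le_self hn hx))

end Adic

theorem ne_zero_of_pow_eq_span_singleton {R : Type*} [CommRing R] [IsDomain R] {I : Ideal R}
    (hI : I ≠ ⊥) {e : ℕ} {c : R} (he : I ^ e = span {c}) : c ≠ 0 := by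
  rintro rfl
  exact pow_ne_zero e hI (he.trans (span_singleton_eq_bot.2 rfl))

section PowerMap

variable {R : Type*} [CommRing R] {I : Ideal R} {p e m : ℕ}

theorem pow_mul_choose_mem (hp : p.Prime) (hpe : (p : R) ∈ I ^ e) (hm : e < (p - 1) * m)
    {d : R} (hd : d ∈ I ^ m) {j : ℕ} (hj₂ : 2 ≤ j) (hjp : j ≤ p) :
    d ^ j * (p.choose j : R) ∈ I ^ (m + e + 1) := by
  have hm₁ : 1 ≤ m := Nat.pos_of_ne_zero (by rintro rfl; simp at hm)
  have hdj : d ^ j ∈ I ^ (m * j) := pow_mul I m j ▸ pow_mem_pow hd j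
  rcases hjp.eq_or_lt with rfl | hjp
  · -- `m * p = m + (p - 1) * m > m + e`
    rw [Nat.choose_self, Nat.cast_one, mul_one]
    refine pow_le_pow_right ?_ hdj
    have := Nat.sub_one_mul j m
    have := Nat.le_mul_of_pos_left m (by omega : 0 < j)
    rw [Nat.mul_comm m j]; omega
  · obtain ⟨t, ht⟩ := hp.dvd_choose_self (by omega : j ≠ 0) hjp
    rw [ht, Nat.cast_mul, ← mul_assoc]
    refine mul_mem_right _ _ (pow_le_pow_right ?_ (pow_add I _ e ▸ mul_mem_mul hdj hpe))
    have := Nat.mul_le_mul_left m hj₂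
    omega

theorem add_pow_sub_pow_sub_mul_mem (hp : p.Prime) (hpe : (p : R) ∈ I ^ e)
    (hm : e < (p - 1) * m) (u : R) {d : R} (hd : d ∈ I ^ m) :
    (u + d) ^ p - u ^ p - p * u ^ (p - 1) * d ∈ I ^ (m + e + 1) := by
  have hp₂ := hp.two_le
  have hexp : (u + d) ^ p - u ^ p - p * u ^ (p - 1) * d =
      ∑ j ∈ range (p - 1), d ^ (j + 2) * (p.choose (j + 2) : R) * u ^ (p - (j + 2)) := by
    rw [add_comm u, add_pow, show p + 1 = p - 1 + 1 + 1 by omega, sum_range_succ',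
      sum_range_succ']
    simp only [Nat.choose_zero_right, Nat.choose_one_right, pow_zero, pow_one, zero_add,
      Nat.sub_zero, Nat.cast_one, mul_one, one_mul]
    ring_nf
  rw [hexp]
  exact sum_mem fun j hj =>
    mul_mem_right _ _ (pow_mul_choose_mem hp hpe hm hd (by omega) (by simp at hj; omega))

theorem pow_sub_one_mem (hp : p.Prime) (hpe : (p : R) ∈ I ^ e) (hm : e < (p - 1) * m) {x : R}
    (hx : x - 1 ∈ I ^ m) : x ^ p - 1 ∈ I ^ (m + e) := by
  have hlin : (p : R) * 1 ^ (p - 1) * (x - 1) ∈ I ^ (m + e) := by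
    rw [one_pow, mul_one, add_comm, pow_add]
    exact mul_mem_mul hpe hx
  have := add_mem
    (pow_le_pow_right (Nat.le_succ _) (add_pow_sub_pow_sub_mul_mem hp hpe hm 1 hx)) hlin
  rwa [add_sub_cancel, one_pow, sub_add_cancel] at this

theorem mem_pow_of_mul_mem_pow_add [IsDomain R] {c : R} (hc : c ≠ 0) (he : I ^ e = span {c})
    {d : R} (h : c * d ∈ I ^ (e + m)) : d ∈ I ^ m := by
  rw [pow_add, he, mem_span_singleton_mul] at h
  obtain ⟨z, hz, hzd⟩ := h
  exact mul_left_cancel₀ hc hzd ▸ hz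

theorem exists_add_pow_sub_mem (hp : p.Prime) (he : I ^ e = span {(p : R)})
    (hm : e < (p - 1) * m) {u b : R} (hu : IsUnit u) (hub : u ^ p - b ∈ I ^ (m + e)) :
    ∃ d ∈ I ^ m, (u + d) ^ p - b ∈ I ^ (m + e + 1) := by
  rw [add_comm, pow_add, he, mem_span_singleton_mul] at hub
  obtain ⟨c, hc, hpc⟩ := hub
  obtain ⟨v, huv⟩ := hu.exists_right_inv
  have huv' : (u * v) ^ (p - 1) = 1 := by rw [huv, one_pow]
  have hd : -(c * v ^ (p - 1)) ∈ I ^ m := neg_mem (mul_mem_right _ _ hc)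
  -- Newton's correction `d = -(u ^ p - b) / (p * u ^ (p - 1))`
  refine ⟨_, hd, ?_⟩
  have hpe : (p : R) ∈ I ^ e := he ▸ mem_span_singleton_self _
  convert add_pow_sub_pow_sub_mul_mem hp hpe hm u hd using 1
  linear_combination -hpc - (p * c) * huv'

theorem eq_of_pow_eq_pow [IsDomain R] [IsHausdorff I R] (hp : p.Prime) (hp₀ : (p : R) ≠ 0)
    (he : I ^ e = span {(p : R)}) (hm : e < (p - 1) * m) {x y : R} (hy : IsUnit y)
    (hxy : x - y ∈ I ^ m) (h : x ^ p = y ^ p) : x = y := by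
  have hpe : (p : R) ∈ I ^ e := he ▸ mem_span_singleton_self _
  have hdeep : ∀ k, x - y ∈ I ^ (m + k) := by
    intro k
    induction k with
    | zero => exact hxy
    | succ k ih =>
      have hk : e < (p - 1) * (m + k) := hm.trans_le (Nat.mul_le_mul_left _ (by omega))
      have := add_pow_sub_pow_sub_mul_mem hp hpe hk y ih
      rw [add_sub_cancel, h, sub_self, zero_sub, neg_mem_iff, mul_assoc,
        show m + k + e + 1 = e + (m + (k + 1)) by omega] at this
      exact (unit_mul_mem_iff_mem _ (hy.pow _)).1 (mem_pow_of_mul_mem_pow_add hp₀ he this)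
  exact sub_eq_zero.1 <| IsHausdorff.eq_of_forall_sub_mem_pow (I := I) fun k =>
    pow_le_pow_right (Nat.le_add_left k m) (by simpa using hdeep k)

theorem exists_pow_eq_of_sub_one_mem [IsAdicComplete I R] (hp : p.Prime)
    (he : I ^ e = span {(p : R)}) (hm : e < (p - 1) * m) {b : R} (hb : b - 1 ∈ I ^ (m + e)) :
    ∃ x, x - 1 ∈ I ^ m ∧ x ^ p = b := by
  have hm₀ : m ≠ 0 := by rintro rfl; simp at hm
  obtain ⟨f, hf⟩ := exists_seq_of_forall_exists_succ
      (P := fun k u => u - 1 ∈ I ^ m ∧ u ^ p - b ∈ I ^ (m + e + k))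
      (Q := fun k u u' => u' - u ∈ I ^ (m + k)) (a₀ := 1)
      ⟨by simp, by simpa using neg_mem hb⟩ fun k u ⟨hu₁, hub⟩ => by
    have hk : e < (p - 1) * (m + k) := hm.trans_le (Nat.mul_le_mul_left _ (by omega))
    obtain ⟨d, hd, hdb⟩ := exists_add_pow_sub_mem hp he hk
      (isUnit_of_sub_one_mem_pow hm₀ hu₁) (by rwa [show m + k + e = m + e + k by omega])
    refine ⟨u + d, ⟨?_, ?_⟩, by simpa using hd⟩
    · rw [add_sub_right_comm]
      exact add_mem hu₁ (pow_le_pow_right (Nat.le_add_right m k) hd)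
    · rwa [show m + e + (k + 1) = m + k + e + 1 by omega]
  obtain ⟨L, hL⟩ := IsPrecomplete.exists_sub_mem_pow (I := I) (f := f) fun k =>
    pow_le_pow_right (Nat.le_add_left k m) (hf k).2
  refine ⟨L, by simpa using sub_mem (hf m).1.1 (hL m),
    IsHausdorff.eq_of_forall_sub_mem_pow (I := I) fun k => ?_⟩
  rw [← sub_add_sub_cancel _ (f k ^ p)]
  obtain ⟨q, hq⟩ := sub_dvd_pow_sub_pow L (f k) p
  refine add_mem ?_ (pow_le_pow_right (by omega) (hf k).1.2)
  rw [hq, ← neg_sub]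
  exact mul_mem_right _ _ (neg_mem (hL k))

end PowerMap

theorem stmt9_general (p : ℕ) [Fact p.Prime]
    (O : Type) [CommRing O] [IsDomain O] [IsDiscreteValuationRing O]
    [IsAdicComplete (IsLocalRing.maximalIdeal O) O]
    (e : ℕ) (he : IsLocalRing.maximalIdeal O ^ e = Ideal.span {(p : O)})
    (n : ℕ) (hn : e < (p - 1) * n) :
    Set.BijOn (fun x : Oˣ => x ^ p)
      {x : Oˣ | (x : O) - 1 ∈ IsLocalRing.maximalIdeal O ^ n}
      {y : Oˣ | (y : O) - 1 ∈ IsLocalRing.maximalIdeal O ^ (n + e)} := by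
  have hp : p.Prime := Fact.out
  have hp₀ : (p : O) ≠ 0 :=
    ne_zero_of_pow_eq_span_singleton (IsDiscreteValuationRing.not_a_field O) he
  have hn₀ : n ≠ 0 := by rintro rfl; simp at hn
  refine ⟨fun x hx => ?_, fun x hx y hy hxy => ?_, fun y hy => ?_⟩
  · simpa using pow_sub_one_mem hp (he ▸ mem_span_singleton_self _) hn hx
  · refine Units.ext (eq_of_pow_eq_pow hp hp₀ he hn y.isUnit ?_ ?_)
    · simpa using sub_mem (hx : (x : O) - 1 ∈ _) (hy : (y : O) - 1 ∈ _)
    · simpa using congrArg Units.val hxy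
  · obtain ⟨x, hx₁, hxp⟩ := exists_pow_eq_of_sub_one_mem hp he hn hy
    obtain ⟨u, rfl⟩ := isUnit_of_sub_one_mem_pow hn₀ hx₁
    exact ⟨u, hx₁, Units.ext (by simpa using hxp)⟩

/-- Let `O` be the ring of integers of a finite extension of `ℚ_p` with ramification
index `e` (`m^e = (p)`) and `e₁ = e/(p-1)`. For every integer `n > e₁` (i.e.
`(p-1)·n > e`), the `p`-th power map is a bijection from `U_n = 1 + m^n` onto
`U_{n+e} = 1 + m^{n+e}`. -/
theorem stmt9 (p : ℕ) [Fact p.Prime]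
    (O : Type) [CommRing O] [IsDomain O] [IsDiscreteValuationRing O]
    [IsAdicComplete (IsLocalRing.maximalIdeal O) O] [CharZero O]
    [CharP (IsLocalRing.ResidueField O) p] [Finite (IsLocalRing.ResidueField O)]
    (e : ℕ) (he : IsLocalRing.maximalIdeal O ^ e = Ideal.span {(p : O)})
    (n : ℕ) (hn : e < (p - 1) * n) :
    Set.BijOn (fun x : Oˣ => x ^ p)
      {x : Oˣ | (x : O) - 1 ∈ IsLocalRing.maximalIdeal O ^ n}
      {y : Oˣ | (y : O) - 1 ∈ IsLocalRing.maximalIdeal O ^ (n + e)} :=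
  stmt9_general p O e he n hn
end

section
/- Let K = ℚ₂(√3) with uniformizer π = √3 - 1. Then -1 is a square modulo π^4 in the ring of integers of K; consequently K(√-1) is the unramified quadratic extension of K. -/
/-!
Put `π = s - 1` and `t = -(7 + 4s)`, a unit; then `s² + π⁴ t = -1`, i.e. `-1 ≡ s² mod π⁴`.
If `i² = -1` in `O_L`, then `j = i - s` satisfies `j² + 2 s j = π⁴ t` with `2 = π² ε`; comparing
valuations forces `π² ∣ j`, and `c = j / π²` satisfies `c² + ε s c = t`. Modulo the maximal ideal
this reads `c² + c = 1`, which has no root in `𝔽₂`, so the residue degree of `O_L / O` is `2`.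
By the fundamental identity `e f = [O_L : O] = 2` the extension is unramified.
-/

open IsLocalRing Module

lemma eq_one_of_ne_zero_of_natCard_eq_two {K : Type*} [MulZeroOneClass K] [Nontrivial K]
    (hK : Nat.card K = 2) {x : K} (hx : x ≠ 0) : x = 1 :=
  ((Nat.card_eq_two_iff' 0).mp hK).unique hx one_ne_zero

lemma sq_add_self_ne_one_of_natCard_eq_two {K : Type*} [Ring K] [Nontrivial K]
    (hK : Nat.card K = 2) (x : K) : x ^ 2 + x ≠ 1 := by
  rcases eq_or_ne x 0 with rfl | hx
  · simp
  · rw [eq_one_of_ne_zero_of_natCard_eq_two hK hx, one_pow, Ne, add_eq_left]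
    exact one_ne_zero

lemma finrank_ne_one_of_sq_add_self_eq_one {K L : Type*} [Field K] [Field L] [Algebra K L]
    (hK : Nat.card K = 2) {c : L} (hc : c ^ 2 + c = 1) : finrank K L ≠ 1 := by
  intro h
  obtain ⟨x, rfl⟩ : c ∈ Set.range (algebraMap K L) := by
    rw [← Algebra.mem_bot, Subalgebra.bot_eq_top_of_finrank_eq_one h]
    trivial
  refine sq_add_self_ne_one_of_natCard_eq_two hK x (FaithfulSMul.algebraMap_injective K L ?_)
  simpa using hc

lemma residue_eq_one_of_isUnit {R : Type*} [CommRing R] [IsLocalRing R]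
    (hR : Nat.card (ResidueField R) = 2) {x : R} (hx : IsUnit x) : residue R x = 1 :=
  eq_one_of_ne_zero_of_natCard_eq_two hR ((residue_ne_zero_iff_isUnit _).mpr hx)

lemma two_le_inertiaDeg_of_residue_sq_add_self_eq_one {R S : Type*} [CommRing R] [IsLocalRing R]
    [CommRing S] [IsLocalRing S] [Algebra R S] [IsLocalHom (algebraMap R S)] [Module.Finite R S]
    (hR : Nat.card (ResidueField R) = 2) {c : S} (hc : residue S c ^ 2 + residue S c = 1) :
    2 ≤ (maximalIdeal S).inertiaDeg R := by
  have hpos := (maximalIdeal S).inertiaDeg_pos R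
  have hne : finrank (R ⧸ maximalIdeal R) (S ⧸ maximalIdeal S) ≠ 1 :=
    finrank_ne_one_of_sq_add_self_eq_one hR hc
  rw [Ideal.inertiaDeg_eq_of_isMaximal (maximalIdeal R)] at hpos ⊢
  omega

lemma dvd_of_sq_add_mul_eq {S : Type*} [CommRing S] [IsDomain S] [ValuationRing S] {p x a b : S}
    (hp : p ≠ 0) (h : x ^ 2 + a * p * x = p ^ 2 * b) : p ∣ x := by
  obtain hpx | ⟨y, rfl⟩ := ValuationRing.dvd_total p x
  · exact hpx
  have hx : x ≠ 0 := by rintro rfl; simp at hp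
  have hy : IsUnit y := by
    refine IsUnit.of_mul_eq_one (y * b - a) ?_
    have : x ^ 2 * (y * (y * b - a) - 1) = 0 := by linear_combination -h
    simpa [hx, sub_eq_zero] using this
  exact hy.mul_right_dvd.mpr dvd_rfl

lemma exists_sq_add_mul_eq_of_sq_eq_neg_one {R S : Type*} [CommRing R] [CommRing S] [IsDomain S]
    [ValuationRing S] [Algebra R S] {π ε s t : R} (h2 : 2 = π ^ 2 * ε)
    (hst : s ^ 2 + π ^ 4 * t = -1) (hπ : algebraMap R S π ≠ 0) {i : S} (hi : i ^ 2 = -1) :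
    ∃ c : S, c ^ 2 + algebraMap R S (ε * s) * c = algebraMap R S t := by
  set f := algebraMap R S
  have h2' : 2 = f π ^ 2 * f ε := by rw [← map_ofNat f 2, h2, map_mul, map_pow]
  have hst' : f s ^ 2 + f π ^ 4 * f t = -1 := by simpa using congr(f $hst)
  have hj : (i - f s) ^ 2 + f (ε * s) * f π ^ 2 * (i - f s) = (f π ^ 2) ^ 2 * f t := by
    rw [map_mul]
    linear_combination hi - hst' - (f s * (i - f s)) * h2'
  obtain ⟨c, hc⟩ := dvd_of_sq_add_mul_eq (pow_ne_zero 2 hπ) hj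
  refine ⟨c, ?_⟩
  have : f π ^ 4 * (c ^ 2 + f (ε * s) * c - f t) = 0 := by
    rw [hc] at hj
    linear_combination hj
  simpa [hπ, sub_eq_zero] using this

lemma associated_pow_of_maximalIdeal_pow_eq_span {R : Type*} [CommRing R] [IsDomain R]
    [IsDiscreteValuationRing R] {ϖ x : R} (hϖ : Irreducible ϖ) {n : ℕ}
    (h : maximalIdeal R ^ n = Ideal.span {x}) : Associated (ϖ ^ n) x := by
  rwa [(IsDiscreteValuationRing.irreducible_iff_uniformizer _).mp hϖ, Ideal.span_singleton_pow,
    Ideal.span_singleton_eq_span_singleton] at h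

lemma eq_maximalIdeal_of_le_of_not_le_sq {S : Type*} [CommRing S] [IsDomain S]
    [IsDiscreteValuationRing S] {I : Ideal S} (hI : I ≠ ⊥) (hle : I ≤ maximalIdeal S)
    (hsq : ¬ I ≤ maximalIdeal S ^ 2) : I = maximalIdeal S := by
  obtain ⟨ϖ, hϖ⟩ := IsDiscreteValuationRing.exists_irreducible S
  obtain ⟨n, rfl⟩ := IsDiscreteValuationRing.ideal_eq_span_pow_irreducible hI hϖ
  rw [(IsDiscreteValuationRing.irreducible_iff_uniformizer ϖ).mp hϖ,
    ← Ideal.span_singleton_pow] at *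
  obtain _ | _ | n := n
  · simp only [pow_zero, Ideal.one_eq_top, top_le_iff, Ideal.span_singleton_eq_top] at hle
    exact absurd hle hϖ.not_isUnit
  · exact pow_one _
  · exact absurd (Ideal.pow_le_pow_right (by omega)) hsq

lemma map_maximalIdeal_eq_of_finrank_le_inertiaDeg (R S : Type*) [CommRing R] [IsDomain R]
    [IsLocalRing R] [CommRing S] [IsDomain S] [IsDiscreteValuationRing S] [Algebra R S]
    [Module.Finite R S] [Module.Flat R S] [IsLocalHom (algebraMap R S)]
    (hR : maximalIdeal R ≠ ⊥) (h : finrank R S ≤ (maximalIdeal S).inertiaDeg R) :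
    (maximalIdeal R).map (algebraMap R S) = maximalIdeal S := by
  have := (Algebra.QuasiFinite.finite_primesOver (S := S) (maximalIdeal R)).fintype
  let m : (maximalIdeal R).primesOver S := ⟨maximalIdeal S, inferInstance, inferInstance⟩
  have hef : (maximalIdeal S).ramificationIdx R * (maximalIdeal S).inertiaDeg R ≤ finrank R S :=
    (Finset.single_le_sum (fun q _ ↦ Nat.zero_le _) (Finset.mem_univ m)).trans
      (Ideal.sum_ramification_inertia_eq_finrank (maximalIdeal R) S).le
  have he : (maximalIdeal S).ramificationIdx R = 1 := by
    have := Nat.le_of_mul_le_mul_right ((hef.trans h).trans_eq (one_mul _).symm)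
      ((maximalIdeal S).inertiaDeg_pos R)
    have := (maximalIdeal S).ramificationIdx_pos R
    omega
  rw [← Ideal.ramificationIdx'_eq_ramificationIdx _ _ hR] at he
  have hle : (maximalIdeal R).map (algebraMap R S) ≤ maximalIdeal S :=
    ((local_hom_TFAE (algebraMap R S)).out 0 2 rfl rfl).mp inferInstance
  refine eq_maximalIdeal_of_le_of_not_le_sq (Ideal.map_ne_bot_of_ne_bot hR) hle ?_
  exact (Ideal.ramificationIdx'_ne_one_iff hle).not.mp (not_not.mpr he)

theorem stmt16_general
    (O : Type) [CommRing O] [IsDomain O] [IsDiscreteValuationRing O]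
    (hcard : Nat.card (IsLocalRing.ResidueField O) = 2)
    (h2 : IsLocalRing.maximalIdeal O ^ 2 = Ideal.span {(2 : O)})
    (s : O) (hs : s ^ 2 = 3) (hπ : Irreducible (s - 1)) :
    (∃ t : O, (1 + (s - 1)) ^ 2 + (s - 1) ^ 4 * t = -1) ∧
    ∀ (OL : Type) [CommRing OL] [IsDomain OL] [IsDiscreteValuationRing OL] [Algebra O OL],
      Algebra.IsIntegral O OL → Nonempty (Module.Basis (Fin 2) O OL) →
      ∀ i : OL, i ^ 2 = -1 → i ∉ Set.range (algebraMap O OL) →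
      Ideal.map (algebraMap O OL) (IsLocalRing.maximalIdeal O) =
        IsLocalRing.maximalIdeal OL := by
  have hst : s ^ 2 + (s - 1) ^ 4 * -(7 + 4 * s) = -1 := by
    linear_combination (-4 * s ^ 3 + 9 * s ^ 2 - 8 * s + 2) * hs
  refine ⟨⟨_, by simpa using hst⟩, ?_⟩
  rintro OL _ _ _ _ - ⟨b⟩ i hi -
  have : Module.Free O OL := .of_basis b
  have : Module.Finite O OL := .of_basis b
  have := Algebra.IsIntegral.isLocalHom O OL
  obtain ⟨ε, hε⟩ := associated_pow_of_maximalIdeal_pow_eq_span hπ h2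
  have hress : residue O s = 1 := by
    rw [← sub_eq_zero, ← map_one (residue O), ← map_sub, residue_eq_zero_iff]
    exact hπ.not_isUnit
  have hrest : residue O (-(7 + 4 * s)) = 1 := residue_eq_one_of_isUnit hcard <|
    IsUnit.of_mul_eq_one (4 * s - 7) (by linear_combination (-16) * hs)
  have hfπ : algebraMap O OL (s - 1) ≠ 0 :=
    (map_ne_zero_iff _ (FaithfulSMul.algebraMap_injective O OL)).mpr hπ.ne_zero
  obtain ⟨c, hc⟩ := exists_sq_add_mul_eq_of_sq_eq_neg_one hε.symm hst hfπ hi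
  have hc' : residue OL c ^ 2 + residue OL c = 1 := by
    have := congr(residue OL $hc)
    simp only [map_add, map_pow, map_mul, ← ResidueField.algebraMap_residue,
      residue_eq_one_of_isUnit hcard ε.isUnit, hress, hrest, map_one] at this
    linear_combination this
  apply map_maximalIdeal_eq_of_finrank_le_inertiaDeg O OL (IsDiscreteValuationRing.not_a_field O)
  rw [finrank_eq_card_basis b, Fintype.card_fin]
  exact two_le_inertiaDeg_of_residue_sq_add_self_eq_one hcard hc'

/-- Let `O` be the ring of integers of `K = ℚ₂(√3)`: a complete discrete valuation ring
of characteristic zero with residue field of cardinality `2`, containing `s = √3`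
(`s² = 3`) with `π = s - 1` a uniformiser and `m² = (2)` (so `v(2) = 2`).  Then `-1` is
a square modulo `π⁴` (explicitly `-1 ≡ (1+π)² mod π⁴`); consequently adjoining `√-1`
yields the unramified quadratic extension of `K`: for any quadratic extension `O_L` of
`O` (a discrete valuation ring, integral over `O`, free of rank `2`) containing an
element `i` with `i² = -1` not coming from `O`, the maximal ideal of `O` generates the
maximal ideal of `O_L`. -/
theorem stmt16
    (O : Type) [CommRing O] [IsDomain O] [IsDiscreteValuationRing O]
    [IsAdicComplete (IsLocalRing.maximalIdeal O) O] [CharZero O]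
    (hcard : Nat.card (IsLocalRing.ResidueField O) = 2)
    (h2 : IsLocalRing.maximalIdeal O ^ 2 = Ideal.span {(2 : O)})
    (s : O) (hs : s ^ 2 = 3) (hπ : Irreducible (s - 1)) :
    (∃ t : O, (1 + (s - 1)) ^ 2 + (s - 1) ^ 4 * t = -1) ∧
    ∀ (OL : Type) [CommRing OL] [IsDomain OL] [IsDiscreteValuationRing OL] [Algebra O OL],
      Algebra.IsIntegral O OL → Nonempty (Module.Basis (Fin 2) O OL) →
      ∀ i : OL, i ^ 2 = -1 → i ∉ Set.range (algebraMap O OL) →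
      Ideal.map (algebraMap O OL) (IsLocalRing.maximalIdeal O) =
        IsLocalRing.maximalIdeal OL :=
  stmt16_general O hcard h2 s hs hπ
end

section
/- Let K be a finite extension of ℚ_p with p ∈ {2,3}, and let δ be a unit of O_K. Then there exists a_6 ∈ O_K^× such that -a_6 - 2^4·3^3·a_6^2 = δ; consequently the Weierstrass cubic y² + xy = x³ + a_6 has discriminant δ and defines an elliptic curve over K with good reduction. -/
open Polynomial IsLocalRing

theorem exists_isUnit_neg_sub_mul_sq_eq {R : Type*} [CommRing R] [IsLocalRing R]
    [HenselianRing R (maximalIdeal R)] {c : R} (hc : c ∈ maximalIdeal R) (δ : Rˣ) :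
    ∃ a : R, IsUnit a ∧ -a - c * a ^ 2 = δ := by
  -- A root `b ∈ 𝔪` of `b² + b + cδ` gives the solution `a = -δ / (1 + b)`.
  have hmonic : (X ^ 2 + (X + C (c * δ)) : R[X]).Monic :=
    monic_X_pow_add (by rw [degree_X_add_C]; exact_mod_cast one_lt_two)
  obtain ⟨b, hroot, hb⟩ := HenselianRing.is_henselian _ hmonic 0
    (by simpa [-mem_maximalIdeal] using (maximalIdeal R).mul_mem_right (δ : R) hc) (by simp)
  simp only [IsRoot, eval_add, eval_pow, eval_X, eval_C, sub_zero] at hroot hb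
  obtain ⟨u, hu⟩ : IsUnit (1 + b) := by
    simpa using isUnit_one_sub_self_of_mem_nonunits (-b) ((maximalIdeal R).neg_mem hb)
  refine ⟨-δ * ↑u⁻¹, (-δ * u⁻¹).isUnit, ?_⟩
  have huu : (u : R) * ↑u⁻¹ = 1 := u.mul_inv
  rw [hu] at huu
  linear_combination (-(δ : R) * ↑u⁻¹ ^ 2) * hroot + (δ * ((1 + b) * ↑u⁻¹ + 1) - δ * ↑u⁻¹) * huu

theorem natCast_mem_maximalIdeal_of_dvd {R : Type*} [CommRing R] [IsLocalRing R] {p n : ℕ}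
    [CharP (ResidueField R) p] (h : p ∣ n) : (n : R) ∈ maximalIdeal R := by
  rwa [← residue_eq_zero_iff, map_natCast, CharP.cast_eq_zero_iff _ p]

theorem WeierstrassCurve.Δ_mk_one_zero_zero_zero {R : Type*} [CommRing R] (a₆ : R) :
    (WeierstrassCurve.mk 1 0 0 0 a₆).Δ = -a₆ - 2 ^ 4 * 3 ^ 3 * a₆ ^ 2 := by
  simp only [WeierstrassCurve.Δ, WeierstrassCurve.b₂, WeierstrassCurve.b₄,
    WeierstrassCurve.b₆, WeierstrassCurve.b₈]
  ring

theorem stmt18_general (p : ℕ) (hp : p = 2 ∨ p = 3)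
    (O : Type) [CommRing O] [IsDomain O] [IsDiscreteValuationRing O]
    [IsAdicComplete (IsLocalRing.maximalIdeal O) O]
    [CharP (IsLocalRing.ResidueField O) p]
    (δ : Oˣ) :
    ∃ a₆ : O, IsUnit a₆ ∧ -a₆ - 2 ^ 4 * 3 ^ 3 * a₆ ^ 2 = (δ : O) ∧
      (WeierstrassCurve.mk 1 0 0 0 a₆).Δ = (δ : O) := by
  have h432 : (2 ^ 4 * 3 ^ 3 : O) ∈ maximalIdeal O := by
    exact_mod_cast natCast_mem_maximalIdeal_of_dvd (R := O) (n := 2 ^ 4 * 3 ^ 3)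
      (by rcases hp with rfl | rfl <;> norm_num)
  obtain ⟨a₆, ha₆, hδ⟩ := exists_isUnit_neg_sub_mul_sq_eq h432 δ
  exact ⟨a₆, ha₆, hδ, by rw [WeierstrassCurve.Δ_mk_one_zero_zero_zero, hδ]⟩

/-- For `p ∈ {2,3}` and a unit `δ` of the ring of integers `O` of a finite extension of
`ℚ_p` (modelled as a complete discrete valuation ring of characteristic zero with finite
residue field of characteristic `p`), there is a unit `a₆` with
`-a₆ - 2^4·3^3·a₆² = δ`; consequently the Weierstrass cubic `y² + xy = x³ + a₆` has
discriminant `δ`, hence defines an elliptic curve with good reduction. -/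
theorem stmt18 (p : ℕ) [Fact p.Prime] (hp : p = 2 ∨ p = 3)
    (O : Type) [CommRing O] [IsDomain O] [IsDiscreteValuationRing O]
    [IsAdicComplete (IsLocalRing.maximalIdeal O) O] [CharZero O]
    [CharP (IsLocalRing.ResidueField O) p] [Finite (IsLocalRing.ResidueField O)]
    (δ : Oˣ) :
    ∃ a₆ : O, IsUnit a₆ ∧ -a₆ - 2 ^ 4 * 3 ^ 3 * a₆ ^ 2 = (δ : O) ∧
      (WeierstrassCurve.mk 1 0 0 0 a₆).Δ = (δ : O) :=
  stmt18_general p hp O δ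
end
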